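/- arXiv:2511.17838 — 5 statements merged into one kernel-verified Lean document; each statement's English description precedes it below -/
import Mathlib

section
/- Let τ be a finite index type, k a natural number, α : τ → Type a family of finite types each with decidable equality and with Fintype.card (α i) = k + 1 for every i, and μ : ∀ i j, α i ≃ α j a family of equivalences satisfying μ i i = Equiv.refl (α i) and (μ i j).trans (μ j l) = μ i l for all i, j, l. Let F : ∀ i, Finset (α i) be finsets with ∑ i, (F i).card ≤ k. Then there exist finsets Γ : ∀ i, Finset (α i) such that for every i, (Γ i).card = k and F i ⊆ Γ i, and for all i j, (Γ i).image (μ i j) = Γ j. -/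
/-- The `ComputeProjections` construction: given per-axis constraint sets `F i` whose
total size is at most `k`, over a family of (k+1)-element axis sets identified by
coherent canonical bijections, there exist size-`k` projections `Γ i` containing all
constraints and compatible with the canonical bijections. -/
theorem computeProjections_exists {τ : Type*} [Fintype τ] (k : ℕ) (α : τ → Type*)
    [∀ i, Fintype (α i)] [∀ i, DecidableEq (α i)]
    (hcard : ∀ i, Fintype.card (α i) = k + 1)
    (μ : ∀ i j, α i ≃ α j)
    (hrefl : ∀ i, μ i i = Equiv.refl (α i))
    (htrans : ∀ i j l, (μ i j).trans (μ j l) = μ i l)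
    (F : ∀ i, Finset (α i))
    (hF : ∑ i, (F i).card ≤ k) :
    ∃ Γ : ∀ i, Finset (α i),
      (∀ i, (Γ i).card = k ∧ F i ⊆ Γ i) ∧
      (∀ i j, (Γ i).image (μ i j) = Γ j) := by
  classical
  cases isEmpty_or_nonempty τ with
  | inl h =>
    exact ⟨fun i => ∅, fun i => (h.elim i), fun i j => (h.elim i)⟩
  | inr h =>
    obtain ⟨i₀⟩ := h
    -- union of all constraints transported to α i₀
    set U : Finset (α i₀) := Finset.univ.biUnion (fun i => (F i).image (μ i i₀)) with hU
    have hUcard : U.card ≤ k := by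
      calc U.card ≤ ∑ i, ((F i).image (μ i i₀)).card := Finset.card_biUnion_le
        _ = ∑ i, (F i).card := by
            refine Finset.sum_congr rfl fun i _ => ?_
            exact Finset.card_image_of_injective _ (μ i i₀).injective
        _ ≤ k := hF
    have hlt : U.card < Fintype.card (α i₀) := by
      rw [hcard i₀]; omega
    have hss : U ⊂ Finset.univ := Finset.ssubset_univ_iff.mpr (by
      intro hUe
      rw [hUe, Finset.card_univ] at hlt
      exact lt_irrefl _ hlt)
    obtain ⟨x, -, hx⟩ := Finset.exists_of_ssubset hss
    refine ⟨fun i => Finset.univ.erase (μ i₀ i x), fun i => ⟨?_, ?_⟩, fun i j => ?_⟩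
    · rw [Finset.card_erase_of_mem (Finset.mem_univ _), Finset.card_univ, hcard]
      omega
    · intro a ha
      refine Finset.mem_erase.mpr ⟨?_, Finset.mem_univ _⟩
      intro hax
      apply hx
      refine Finset.mem_biUnion.mpr ⟨i, Finset.mem_univ _, Finset.mem_image.mpr ⟨a, ha, ?_⟩⟩
      subst hax
      have := congrArg (fun e => Equiv.toFun e x) (htrans i₀ i i₀)
      simpa [hrefl] using this
    · rw [Finset.image_erase (μ i j).injective, Finset.image_univ_of_surjective (μ i j).surjective]
      congr 1
      have := congrArg (fun e => Equiv.toFun e x) (htrans i₀ i j)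
      simpa using this
end

section
/- Fix types α (tensor elements) and V (rule variables), a natural number m, an index transformer e : (V → ℤ) → ℤ, condition predicates g : Fin m → (V → ℤ) → Prop, a scalar function scalarf : α → (Fin m → Prop) → Prop, and a restriction-monotone family of precondition predicates Pre : ∀ i : ℕ, ((Fin i → V → ℤ) → Prop). For a rank i, define valid i := ∀ (X : (Fin i → ℤ) → α) (v : Fin i → (V → ℤ)), Pre i v → scalarf (X (fun j => e (v j))) (fun l => ∀ j : Fin i, g l (v j)). Then for every k with max m 1 ≤ k, valid k implies valid (k + 1). -/
/-- Validity of a rewrite rule (in canonical scalar-function form with one access to the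
input tensor `X` and `m` fold-conditions) at rank `i`. -/
def Valid {α V : Type*} (m : ℕ)
    (e : (V → ℤ) → ℤ)
    (g : Fin m → (V → ℤ) → Prop)
    (scalarf : α → (Fin m → Prop) → Prop)
    (Pre : ∀ i : ℕ, (Fin i → V → ℤ) → Prop)
    (i : ℕ) : Prop :=
  ∀ (X : (Fin i → ℤ) → α) (v : Fin i → V → ℤ), Pre i v →
    scalarf (X (fun j => e (v j))) (fun l => ∀ j : Fin i, g l (v j))

/-- Sufficient-rank lemma for rules with one access and `m` conditions: if the
precondition family is restriction-monotone, then for every `k ≥ max m 1`, validity at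
rank `k` implies validity at rank `k+1`. -/
theorem sufficient_rank_one_access {α V : Type*} (m : ℕ)
    (e : (V → ℤ) → ℤ)
    (g : Fin m → (V → ℤ) → Prop)
    (scalarf : α → (Fin m → Prop) → Prop)
    (Pre : ∀ i : ℕ, (Fin i → V → ℤ) → Prop)
    (hPre : ∀ (k i : ℕ), k ≤ i → ∀ ρ : Fin k → Fin i, Function.Injective ρ →
      ∀ v : Fin i → V → ℤ, Pre i v → Pre k (fun j => v (ρ j)))
    (k : ℕ) (hk : max m 1 ≤ k) :
    Valid m e g scalarf Pre k → Valid m e g scalarf Pre (k + 1) := by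
  intro hval X v hv
  classical
  have hm : m ≤ k := le_trans (le_max_left m 1) hk
  set f : Fin m → Fin (k + 1) := fun l =>
    if h : ∀ j, g l (v j) then 0 else Classical.choose (not_forall.1 h) with hfdef
  have hf : ∀ l, ¬ (∀ j, g l (v j)) → ¬ g l (v (f l)) := by
    intro l h
    simp only [hfdef, dif_neg h]
    exact Classical.choose_spec (not_forall.1 h)
  obtain ⟨a, ha⟩ : ∃ a : Fin (k + 1), a ∉ Finset.image f Finset.univ := by
    by_contra hcon
    push_neg at hcon
    have h1 := Finset.card_le_card
      (fun x _ => hcon x : (Finset.univ : Finset (Fin (k+1))) ⊆ Finset.image f Finset.univ)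
    have h2 : (Finset.image f Finset.univ).card ≤ m :=
      le_trans Finset.card_image_le (by simp)
    simp [Finset.card_univ] at h1
    omega
  have hρ : Function.Injective a.succAbove := Fin.succAbove_right_injective
  have hPrek := hPre k (k + 1) (Nat.le_succ k) a.succAbove hρ v hv
  have hvk := hval (fun y => X (a.insertNth (e (v a)) y)) (fun j => v (a.succAbove j)) hPrek
  have hpt : a.insertNth (e (v a)) (fun j => e (v (a.succAbove j))) = fun i => e (v i) := by
    funext i
    rcases eq_or_ne i a with rfl | h
    · simp
    · obtain ⟨j, rfl⟩ := Fin.exists_succAbove_eq h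
      simp
  have hcond : (fun l => ∀ j : Fin k, g l (v (a.succAbove j)))
      = fun l => ∀ j : Fin (k + 1), g l (v j) := by
    funext l
    apply propext
    constructor
    · intro h
      by_contra hc
      have hfl := hf l hc
      have hne : f l ≠ a := fun he => ha (he ▸ Finset.mem_image_of_mem f (Finset.mem_univ l))
      obtain ⟨j, hj⟩ := Fin.exists_succAbove_eq hne
      exact hfl (hj ▸ h j)
    · intro h j
      exact h _
  simp only [hpt, hcond] at hvk
  exact hvk
end

section
/- Let p be a natural number, valid : (Fin p → ℕ) → Prop a predicate on rank assignments, and k : Fin p → ℕ bounds with 1 ≤ k i for every i. Suppose the step property holds: for every i : Fin p, every M : Fin p → ℕ with 1 ≤ M j for all j, and every r with k i ≤ r, valid (Function.update M i r) implies valid (Function.update M i (r + 1)). Then the following are equivalent: (a) valid M holds for every M : Fin p → ℕ with 1 ≤ M j ≤ k j for all j; (b) valid M holds for every M : Fin p → ℕ with 1 ≤ M j for all j. -/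
/-- Abstract k-induction principle: given per-class sufficient ranks `k i ≥ 1` and the
per-class step property (uniform in the ranks of the other classes), validity of all
bounded rank instantiations is equivalent to validity of all rank instantiations. -/
theorem k_induction_multi (p : ℕ) (valid : (Fin p → ℕ) → Prop) (k : Fin p → ℕ)
    (hk : ∀ i, 1 ≤ k i)
    (hstep : ∀ (i : Fin p) (M : Fin p → ℕ), (∀ j, 1 ≤ M j) →
      ∀ r, k i ≤ r →
        valid (Function.update M i r) → valid (Function.update M i (r + 1))) :
    (∀ M : Fin p → ℕ, (∀ j, 1 ≤ M j ∧ M j ≤ k j) → valid M) ↔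
      (∀ M : Fin p → ℕ, (∀ j, 1 ≤ M j) → valid M) := by
  constructor
  · intro hb M hM
    -- strong induction on the excess ∑ (M j - k j)
    suffices H : ∀ n (M : Fin p → ℕ), (∀ j, 1 ≤ M j) →
        (∑ j, (M j - k j)) = n → valid M from H _ M hM rfl
    intro n
    induction n using Nat.strong_induction_on with
    | _ n ih =>
      intro M hM hsum
      by_cases hle : ∀ j, M j ≤ k j
      · exact hb M fun j => ⟨hM j, hle j⟩
      · push_neg at hle
        obtain ⟨i, hi⟩ := hle
        have hki : k i ≤ M i - 1 := by omega
        set M' : Fin p → ℕ := Function.update M i (M i - 1) with hM'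
        have hM'pos : ∀ j, 1 ≤ M' j := by
          intro j
          by_cases hji : j = i
          · rw [hji]; simp [M', Function.update_self]; have := hk i; omega
          · simpa [M', Function.update_of_ne hji] using hM j
        have hsum' : (∑ j, (M' j - k j)) < n := by
          subst hsum
          apply Finset.sum_lt_sum
          · intro j _
            by_cases hji : j = i
            · rw [hji]; simp [M', Function.update_self]; omega
            · simp [M', Function.update_of_ne hji]
          · refine ⟨i, Finset.mem_univ i, ?_⟩
            simp [M', Function.update_self]; omega
        have hvalid' : valid M' := ih _ hsum' M' hM'pos rfl
        have h1 : Function.update M' i (M i - 1) = M' := by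
          simp [M', Function.update_idem]
        have h2 : Function.update M' i ((M i - 1) + 1) = M := by
          funext j
          by_cases hji : j = i
          · rw [hji]; simp [M', Function.update_self]; omega
          · simp [M', Function.update_of_ne hji]
        have := hstep i M' hM'pos (M i - 1) hki (by rw [h1]; exact hvalid')
        rwa [h2] at this
  · intro hall M hM
    exact hall M fun j => (hM j).1
end

section
/- Let α be a type, ι a type (the named-axes of the single aggregated-axis), t : (ι → ℤ) → α a tensor given as a function on integer access maps, v : α a padding value, and l₁ l₂ : ι → ℤ padding maps with 0 ≤ l₁ i and 0 ≤ l₂ i for every i : ι. Then for every access A : ι → ℤ: (if ∀ i, l₂ i ≤ A i then (if ∀ i, l₁ i ≤ A i - l₂ i then t (fun i => A i - l₁ i - l₂ i) else v) else v) = (if ∀ i, l₁ i + l₂ i ≤ A i then t (fun i => A i - (l₁ i + l₂ i)) else v). -/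
open Classical

/-- Pointwise form of the `PadLowCombine` rewrite rule
`pad-low(pad-low(t, v, l₁), v, l₂) = pad-low(t, v, l₁ + l₂)` under the precondition
that both padding maps are componentwise nonnegative. -/
theorem padLowCombine {α ι : Type*} (t : (ι → ℤ) → α) (v : α)
    (l₁ l₂ : ι → ℤ) (h₁ : ∀ i, 0 ≤ l₁ i) (h₂ : ∀ i, 0 ≤ l₂ i) (A : ι → ℤ) :
    (if ∀ i, l₂ i ≤ A i then
      (if ∀ i, l₁ i ≤ A i - l₂ i then t (fun i => A i - l₁ i - l₂ i) else v)
     else v)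
    = (if ∀ i, l₁ i + l₂ i ≤ A i then t (fun i => A i - (l₁ i + l₂ i)) else v) := by
  by_cases h : ∀ i, l₁ i + l₂ i ≤ A i
  · have hb : ∀ i, l₂ i ≤ A i := fun i => le_trans (by linarith [h₁ i]) (h i)
    have hc : ∀ i, l₁ i ≤ A i - l₂ i := fun i => by linarith [h i]
    simp only [if_pos h, if_pos hb, if_pos hc]
    congr 1; funext i; ring
  · rw [if_neg h]
    split_ifs with hb hc
    · exact absurd (fun i => by linarith [hc i]) h
    · rfl
    · rfl
end

section
/- There exist integers S₁ S₂ with 1 ≤ S₁ and 1 ≤ S₂, a rank-2 tensor Y : ℤ → ℤ → ℤ, and an access (A₁, A₂) with 0 ≤ A₁ < (S₁ + 1) / 2 and 0 ≤ A₂ < (S₂ + 1) / 2 (integer division) and with 2 * A₁ < S₁ and 2 * A₂ < S₂, such that (if 1 ≤ A₁ ∧ 1 ≤ A₂ then 0 else Y A₁ A₂) ≠ (if 1 ≤ A₁ ∧ 1 ≤ A₂ then 0 else Y (2 * A₁) (2 * A₂)). Consequently, the SliceDyUpSlice rule is invalid at rank 2. -/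
/-- The `SliceDyUpSlice` rule is invalid at rank 2: there exist a shape `(S₁, S₂)`, a
rank-2 tensor `Y`, and a valid output access `(A₁, A₂)` at which the LHS
(slice with stride 1 then dyup-slice with offset (1,1) and update value 0) differs from
the RHS (slice with stride 2 then the same dyup-slice). -/
theorem sliceDyUpSlice_rank2_invalid :
    ∃ (S₁ S₂ : ℤ) (Y : ℤ → ℤ → ℤ) (A₁ A₂ : ℤ),
      1 ≤ S₁ ∧ 1 ≤ S₂ ∧
      0 ≤ A₁ ∧ A₁ < (S₁ + 1) / 2 ∧
      0 ≤ A₂ ∧ A₂ < (S₂ + 1) / 2 ∧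
      2 * A₁ < S₁ ∧ 2 * A₂ < S₂ ∧
      (if 1 ≤ A₁ ∧ 1 ≤ A₂ then (0 : ℤ) else Y A₁ A₂) ≠
        (if 1 ≤ A₁ ∧ 1 ≤ A₂ then (0 : ℤ) else Y (2 * A₁) (2 * A₂)) := by
  refine ⟨3, 1, fun i _ => i, 1, 0, ?_⟩
  norm_num
end
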